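/- arXiv:1702.03530 — 2 statements merged into one kernel-verified Lean document; each statement's English description precedes it below -/
import Mathlib

section
/- Lemma 32 (proper subDAG lemma; combined form): Let C be a graphoid of CI relations on [p], let G_τ be a minimal I-MAP with respect to C, and let H be a DAG that is Markov equivalent to G_τ and obtained from G_τ by reversing a single covered arrow. Suppose there is an arrow x → y of H whose deletion yields a DAG H' with CI(H') ⊆ C. Then for every linear extension π of H, the minimal I-MAP G_π is a proper subDAG of H: every arrow of G_π is an arrow of H and G_π has strictly fewer arrows than H. -/
/-!
Since `π` is a linear extension of `H`, it is also one of the subDAG `H'`, and `CI(H') ⊆ C`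
makes `H'` an I-MAP of `C`. A minimal I-MAP lies inside every I-MAP having its ordering as a
linear extension: if `π_i, π_j` (`i < j`) are not adjacent in `H'`, they are d-separated in `H'`
by `{π_1, …, π_j} \ {π_i, π_j}` (the ordered local Markov property), so that CI relation lies in
`C` and `G_π` has no arrow `π_i → π_j`. Hence `G_π ⊆ H' ⊊ H`.

For the local Markov property: a node of highest `π`-position on a d-connecting walk from `π_i`
to `π_j`, if it lies above `π_j`, is internal and a collider, hence has a descendant in the
conditioning set, which is impossible. So no node of the walk comes after `π_j`, and the node
just before `π_j` then points into `π_j`: it is a non-collider distinct from `π_i`, yet lies in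
the conditioning set.
-/

open scoped Classical

namespace GSP

/-- A DAG on the node set `Fin p`, given by its finite set of arrows,
which must form an acyclic relation. -/
structure DAG (p : ℕ) where
  arrows : Finset (Fin p × Fin p)
  acyclic : ∀ i : Fin p, ¬ Relation.TransGen (fun a b => (a, b) ∈ arrows) i i

variable {p : ℕ}

namespace DAG

/-- `a → b` is an arrow of `G`. -/
def Arrow (G : DAG p) (a b : Fin p) : Prop := (a, b) ∈ G.arrows

/-- The number of arrows of `G`, denoted `|G|`. -/
def numArrows (G : DAG p) : ℕ := G.arrows.card

/-- The set of parents of a node `j` in `G`. -/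
noncomputable def parents (G : DAG p) (j : Fin p) : Finset (Fin p) :=
  Finset.univ.filter fun i => G.Arrow i j

/-- Adjacency: `a` and `b` are joined by an arrow in some direction. -/
def Adj (G : DAG p) (a b : Fin p) : Prop := G.Arrow a b ∨ G.Arrow b a

/-- `b` is a collider between `a` and `c`: both arrows point into `b`. -/
def Collider (G : DAG p) (a b c : Fin p) : Prop := G.Arrow a b ∧ G.Arrow c b

/-- `d` is a (reflexive) descendant of `a` in `G`. -/
def Desc (G : DAG p) (a d : Fin p) : Prop := Relation.ReflTransGen G.Arrow a d

/-- The list of nodes `l` is a d-connecting walk given `S`: consecutive nodes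
are adjacent, every internal collider lies in `S` or has a descendant in `S`,
and no internal non-collider lies in `S`. -/
def DConnWalk (G : DAG p) (S : Finset (Fin p)) (l : List (Fin p)) : Prop :=
  l.Chain' G.Adj ∧
  ∀ (m : ℕ) (_ : 1 ≤ m) (h2 : m + 1 < l.length),
    (G.Collider (l.get ⟨m - 1, by omega⟩) (l.get ⟨m, by omega⟩) (l.get ⟨m + 1, h2⟩) →
      ∃ d ∈ S, G.Desc (l.get ⟨m, by omega⟩) d) ∧
    (¬ G.Collider (l.get ⟨m - 1, by omega⟩) (l.get ⟨m, by omega⟩) (l.get ⟨m + 1, h2⟩) →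
      l.get ⟨m, by omega⟩ ∉ S)

/-- `i` and `j` are d-connected given `S` in `G`. -/
def DConn (G : DAG p) (i j : Fin p) (S : Finset (Fin p)) : Prop :=
  ∃ l : List (Fin p), l.head? = some i ∧ l.getLast? = some j ∧ G.DConnWalk S l

/-- `i` and `j` are d-separated given `S` in `G`. -/
def DSep (G : DAG p) (i j : Fin p) (S : Finset (Fin p)) : Prop := ¬ G.DConn i j S

end DAG

/-- A conditional independence (CI) relation `i ⊥ j | S` on `[p]`. -/
abbrev CIRel (p : ℕ) := Fin p × Fin p × Finset (Fin p)

/-- The set of CI relations encoded by the d-separations of `G`. -/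
def CIof (G : DAG p) : Set (CIRel p) :=
  {t | t.1 ≠ t.2.1 ∧ t.1 ∉ t.2.2 ∧ t.2.1 ∉ t.2.2 ∧ G.DSep t.1 t.2.1 t.2.2}

/-- The symmetric closure of a set of CI relations. -/
def symClosure (C : Set (CIRel p)) : Set (CIRel p) :=
  {t | t ∈ C ∨ (t.2.1, t.1, t.2.2) ∈ C}

/-- Symmetry of a set of CI relations. -/
def SymmetricCI (C : Set (CIRel p)) : Prop :=
  ∀ i j S, (i, j, S) ∈ C → (j, i, S) ∈ C

/-- A semigraphoid: symmetric and satisfying (SG2). -/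
def Semigraphoid (C : Set (CIRel p)) : Prop :=
  SymmetricCI C ∧
  ∀ i j k S, (i, j, S) ∈ C → (i, k, insert j S) ∈ C →
    (i, k, S) ∈ C ∧ (i, j, insert k S) ∈ C

/-- A graphoid: a semigraphoid additionally satisfying intersection (INT). -/
def Graphoid (C : Set (CIRel p)) : Prop :=
  Semigraphoid C ∧
  ∀ i j k S, (i, j, insert k S) ∈ C → (i, k, insert j S) ∈ C →
    (i, j, S) ∈ C ∧ (i, k, S) ∈ C

/-- Build a DAG from a relation compatible with a numeric ordering. -/
noncomputable def mkDAG (R : Fin p → Fin p → Prop) (f : Fin p → ℕ)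
    (hf : ∀ a b, R a b → f a < f b) : DAG p where
  arrows := Finset.univ.filter fun e : Fin p × Fin p => R e.1 e.2
  acyclic := by
    intro i hi
    have key : ∀ a b : Fin p,
        Relation.TransGen (fun a b : Fin p =>
          (a, b) ∈ Finset.univ.filter fun e : Fin p × Fin p => R e.1 e.2) a b →
        f a < f b := by
      intro a b h
      induction h with
      | single h => exact hf _ _ (by simpa using h)
      | tail _ h ih => exact lt_trans ih (hf _ _ (by simpa using h))
    exact lt_irrefl _ (key i i hi)

/-- The conditioning set `{π_1, …, π_j} \ {π_i, π_j}` (where `b = π_j` is the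
later node and `a = π_i` the earlier one) used in the definition of minimal
I-MAPs. -/
noncomputable def condSet (π : Equiv.Perm (Fin p)) (a b : Fin p) : Finset (Fin p) :=
  ((Finset.univ.filter fun k : Fin p => π.symm k ≤ π.symm b).erase a).erase b

/-- The minimal I-MAP `G_π` of a set `C` of CI relations with respect to the
permutation (ordering) `π`: there is an arrow `π_i → π_j` for positions `i < j`
iff `π_i ⊥ π_j | {π_1, …, π_j} \ {π_i, π_j}` is not in `C`. -/
noncomputable def minimalIMAP (C : Set (CIRel p)) (π : Equiv.Perm (Fin p)) : DAG p :=
  mkDAG (fun a b => π.symm a < π.symm b ∧ (a, b, condSet π a b) ∉ C)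
    (fun a => (π.symm a : ℕ)) (fun a b h => by exact_mod_cast h.1)

/-- Markov equivalence of DAGs: equal sets of d-separation statements. -/
def MarkovEquiv (G H : DAG p) : Prop := CIof G = CIof H

/-- `H` is an independence map of `G`, written `G ≤ H`: `CI(H) ⊆ CI(G)`. -/
def IMapLE (G H : DAG p) : Prop := CIof H ⊆ CIof G

/-- `π` is a linear extension of `G`: every arrow goes from an earlier to a
later element of `π`. -/
def IsLinExt (G : DAG p) (π : Equiv.Perm (Fin p)) : Prop :=
  ∀ a b, G.Arrow a b → π.symm a < π.symm b

/-- `a → b` is a covered arrow of `G`: `pa(a) = pa(b) \ {a}`. -/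
def DAG.Covered (G : DAG p) (a b : Fin p) : Prop :=
  G.Arrow a b ∧ G.parents a = (G.parents b).erase a

/-- The minimal I-MAPs `G_σ` and `G_ρ` are connected by a covered arrow
reversal: `ρ` is a linear extension of the DAG obtained from `G_σ` by
reversing one covered arrow of `G_σ`. -/
def CoveredReversalStep (C : Set (CIRel p)) (σ ρ : Equiv.Perm (Fin p)) : Prop :=
  ∃ a b : Fin p, (minimalIMAP C σ).Covered a b ∧
    ρ.symm b < ρ.symm a ∧
    ∀ x y : Fin p, (minimalIMAP C σ).Arrow x y → (x, y) ≠ (a, b) →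
      ρ.symm x < ρ.symm y

/-- A weakly decreasing sequence of covered arrow reversals: a sequence of
minimal I-MAPs in which consecutive members are connected by covered arrow
reversals and the number of arrows never increases. -/
def WeaklyDecreasingSeq (C : Set (CIRel p)) (s : List (Equiv.Perm (Fin p))) : Prop :=
  s.Chain' fun σ ρ => CoveredReversalStep C σ ρ ∧
    (minimalIMAP C ρ).numArrows ≤ (minimalIMAP C σ).numArrows

/-- Some weakly decreasing sequence of covered arrow reversals starting at
`G_π` reaches a minimal I-MAP with strictly fewer arrows. -/
def EscapesByCoveredReversals (C : Set (CIRel p)) (π : Equiv.Perm (Fin p)) : Prop :=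
  ∃ (s : List (Equiv.Perm (Fin p))) (τ : Equiv.Perm (Fin p)),
    s.head? = some π ∧ s.getLast? = some τ ∧ WeaklyDecreasingSeq C s ∧
    (minimalIMAP C τ).numArrows < (minimalIMAP C π).numArrows

/-- The TSP assumption of `C` with respect to `G`. -/
def TSP (C : Set (CIRel p)) (G : DAG p) : Prop :=
  CIof G ⊆ C ∧
  ∀ π : Equiv.Perm (Fin p), ¬ EscapesByCoveredReversals C π →
    MarkovEquiv (minimalIMAP C π) G

/-- The SMR assumption of `C` with respect to `G`. -/
def SMR (C : Set (CIRel p)) (G : DAG p) : Prop :=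
  CIof G ⊆ C ∧
  ∀ H : DAG p, CIof H ⊆ C → ¬ MarkovEquiv H G → G.numArrows < H.numArrows

end GSP

namespace GSP

variable {p : ℕ}

theorem DAG.ne_of_adj {G : DAG p} {a b : Fin p} (h : G.Adj a b) : a ≠ b := by
  rintro rfl
  exact G.acyclic a (.single (h.elim id id))

theorem DAG.Adj.symm {G : DAG p} {a b : Fin p} (h : G.Adj a b) : G.Adj b a := Or.symm h

theorem mem_condSet {π : Equiv.Perm (Fin p)} {a b k : Fin p} :
    k ∈ condSet π a b ↔ π.symm k ≤ π.symm b ∧ k ≠ a ∧ k ≠ b := by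
  simp only [condSet, Finset.mem_erase, Finset.mem_filter, Finset.mem_univ, true_and]
  tauto

theorem mem_minimalIMAP_arrows {C : Set (CIRel p)} {π : Equiv.Perm (Fin p)} {a b : Fin p} :
    (a, b) ∈ (minimalIMAP C π).arrows ↔ π.symm a < π.symm b ∧ (a, b, condSet π a b) ∉ C := by
  simp [minimalIMAP, mkDAG]

namespace IsLinExt

variable {K : DAG p} {π : Equiv.Perm (Fin p)}

theorem mono {G : DAG p} (hGK : G.arrows ⊆ K.arrows) (hlin : IsLinExt K π) : IsLinExt G π :=
  fun a b hab => hlin a b (hGK hab)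

theorem le_of_desc (hlin : IsLinExt K π) {a d : Fin p} (h : K.Desc a d) :
    π.symm a ≤ π.symm d := by
  induction h with
  | refl => exact le_rfl
  | tail _ hcd ih => exact ih.trans (hlin _ _ hcd).le

theorem arrow_of_adj_of_le (hlin : IsLinExt K π) {a b : Fin p} (h : K.Adj a b)
    (hab : π.symm a ≤ π.symm b) : K.Arrow a b :=
  h.resolve_right fun hba => (hlin _ _ hba).not_ge hab

theorem dConnWalk_le {S : Finset (Fin p)} {t : Fin p} (hlin : IsLinExt K π)
    (hS : ∀ s ∈ S, π.symm s ≤ t) {l : List (Fin p)} (hl : K.DConnWalk S l)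
    (hhead : ∀ a ∈ l.head?, π.symm a ≤ t) (hlast : ∀ a ∈ l.getLast?, π.symm a ≤ t) :
    ∀ a ∈ l, π.symm a ≤ t := by
  by_contra! ⟨a, ha, hta⟩
  obtain ⟨⟨k, hk⟩, ha⟩ := List.get_of_mem ha
  obtain ⟨⟨m, hm⟩, -, hmax⟩ := Finset.univ.exists_max_image
    (fun i : Fin l.length => π.symm (l.get i)) ⟨⟨k, hk⟩, Finset.mem_univ _⟩
  have htop : t < π.symm l[m] := hta.trans_le (ha ▸ hmax ⟨k, hk⟩ (Finset.mem_univ _))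
  have hm0 : m ≠ 0 := by
    rintro rfl
    exact (hhead _ (by simp [List.head?_eq_getElem?])).not_gt htop
  have hmlast : m + 1 ≠ l.length := by
    intro h
    exact (hlast _ (by simp [List.getLast?_eq_getElem?, ← h])).not_gt htop
  have hchain := List.isChain_iff_getElem.mp hl.1
  have hcol : K.Collider l[m - 1] l[m] l[m + 1] := by
    refine ⟨hlin.arrow_of_adj_of_le ?_ (hmax ⟨m - 1, by omega⟩ (Finset.mem_univ _)),
      hlin.arrow_of_adj_of_le (hchain m (by omega)).symm
        (hmax ⟨m + 1, by omega⟩ (Finset.mem_univ _))⟩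
    simpa [Nat.sub_add_cancel (Nat.one_le_iff_ne_zero.mpr hm0)] using hchain (m - 1) (by omega)
  obtain ⟨d, hdS, hdesc⟩ := (hl.2 m (by omega) (by omega)).1 hcol
  exact (hS d hdS).not_gt (htop.trans_le (hlin.le_of_desc hdesc))

theorem dSep_condSet (hlin : IsLinExt K π) {u v : Fin p} (huv : π.symm u < π.symm v)
    (hadj : ¬ K.Adj u v) : K.DSep u v (condSet π u v) := by
  rintro ⟨l, hu, hv, hl⟩
  have hbound := hlin.dConnWalk_le (fun s hs => (mem_condSet.mp hs).1) hl
    (by simpa [hu] using huv.le) (by simp [hv])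
  have hlen : 2 ≤ l.length := by
    rcases l with _ | ⟨a, _ | ⟨b, l⟩⟩
    · simp at hu
    · simp at hu hv
      exact absurd huv (by simp [← hu, ← hv])
    · simp
  have hv' : l[l.length - 1] = v := by
    rw [List.getLast?_eq_getElem?, List.getElem?_eq_getElem (by omega)] at hv
    exact Option.some.inj hv
  set w := l[l.length - 2]
  have hwv : K.Adj w v := by
    simpa [show l.length - 2 + 1 = l.length - 1 by omega, hv'] using
      List.isChain_iff_getElem.mp hl.1 (l.length - 2) (by omega)
  have hwu : w ≠ u := fun h => hadj (h ▸ hwv)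
  have hwS : w ∈ condSet π u v :=
    mem_condSet.mpr ⟨hbound w (List.getElem_mem _), hwu, K.ne_of_adj hwv⟩
  have hw1 : 1 ≤ l.length - 2 := by
    by_contra! h
    rw [List.head?_eq_getElem?, List.getElem?_eq_getElem (by omega)] at hu
    exact hwu (by simpa [w, show l.length - 2 = 0 by omega] using hu)
  have hnoncol : ¬ K.Collider l[l.length - 2 - 1] w l[l.length - 2 + 1] := by
    rintro ⟨-, hvw⟩
    simp only [show l.length - 2 + 1 = l.length - 1 by omega, hv'] at hvw
    exact (hlin _ _ hvw).not_ge (hbound w (List.getElem_mem _))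
  exact (hl.2 (l.length - 2) hw1 (by omega)).2 hnoncol hwS

end IsLinExt

theorem minimalIMAP_arrows_subset {C : Set (CIRel p)} {K : DAG p} {π : Equiv.Perm (Fin p)}
    (hKC : CIof K ⊆ C) (hlin : IsLinExt K π) : (minimalIMAP C π).arrows ⊆ K.arrows := by
  rintro ⟨a, b⟩ hab
  obtain ⟨hlt, hnotC⟩ := mem_minimalIMAP_arrows.mp hab
  by_contra hnot
  have hadj : ¬ K.Adj a b := fun h => h.elim hnot fun hba => (hlin _ _ hba).not_gt hlt
  exact hnotC <| hKC ⟨fun h => hlt.ne (congrArg π.symm h), fun h => (mem_condSet.mp h).2.1 rfl,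
    fun h => (mem_condSet.mp h).2.2 rfl, hlin.dSep_condSet hlt hadj⟩

theorem minimalIMAP_of_linext_is_proper_subDAG_general
    (p : ℕ) (C : Set (CIRel p))
    (H : DAG p)
    (x y : Fin p) (hxyH : (x, y) ∈ H.arrows)
    (H' : DAG p) (hH' : H'.arrows = H.arrows.erase (x, y))
    (hH'C : CIof H' ⊆ C)
    (π : Equiv.Perm (Fin p)) (hlin : IsLinExt H π) :
    (minimalIMAP C π).arrows ⊆ H.arrows ∧
    (minimalIMAP C π).numArrows < H.numArrows := by
  have hsub : (minimalIMAP C π).arrows ⊆ H.arrows.erase (x, y) :=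
    hH' ▸ minimalIMAP_arrows_subset hH'C (hlin.mono (hH' ▸ Finset.erase_subset _ _))
  exact ⟨hsub.trans (Finset.erase_subset _ _),
    (Finset.card_le_card hsub).trans_lt (Finset.card_lt_card (Finset.erase_ssubset hxyH))⟩

/-- Lemma 32, proper subDAG lemma, combined form: let `C`
be a graphoid, `G_τ` a minimal I-MAP w.r.t. `C`, and `H` a DAG Markov
equivalent to `G_τ` and obtained from `G_τ` by reversing a single covered
arrow `a → b`. Suppose some arrow `x → y` of `H` can be deleted to give a DAG
`H'` with `CI(H') ⊆ C`. Then for every linear extension `π` of `H`, the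
minimal I-MAP `G_π` is a proper subDAG of `H`: every arrow of `G_π` is an
arrow of `H`, and `G_π` has strictly fewer arrows than `H`. -/
theorem minimalIMAP_of_linext_is_proper_subDAG
    (p : ℕ) (C : Set (CIRel p)) (hC : Graphoid C)
    (τ : Equiv.Perm (Fin p)) (H : DAG p) (a b : Fin p)
    (hcov : (minimalIMAP C τ).Covered a b)
    (hH : H.arrows = insert (b, a) ((minimalIMAP C τ).arrows.erase (a, b)))
    (hME : MarkovEquiv H (minimalIMAP C τ))
    (x y : Fin p) (hxyH : (x, y) ∈ H.arrows)
    (H' : DAG p) (hH' : H'.arrows = H.arrows.erase (x, y))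
    (hH'C : CIof H' ⊆ C)
    (π : Equiv.Perm (Fin p)) (hlin : IsLinExt H π) :
    (minimalIMAP C π).arrows ⊆ H.arrows ∧
    (minimalIMAP C π).numArrows < H.numArrows :=
  minimalIMAP_of_linext_is_proper_subDAG_general p C H x y hxyH H' hH' hH'C π hlin

end GSP
end

section
/- Theorem 3 (the even permutohedron is a (p−1)-dimensional convex polytope): For p ≥ 3, let v = (3/2, 3/2, 3, 4, …, p) ∈ ℝ^p and let V be the set of all vectors obtained by permuting the coordinates of v (so |V| = p!/2). Then the convex hull of V is a convex polytope whose affine span has dimension p − 1, and every element of V is an extreme point of this convex hull (so the set of extreme points of conv(V) equals V). -/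
/-!
All coordinate permutations of `v` have the same coordinate sum and the same sum of squares.

The first confines them to a hyperplane `∑ xᵢ = c`. Conversely, since two coordinates of `v`
differ, some permutation `w` of `v` has `wᵢ ≠ wⱼ`, and then `w ∘ swap i j - w` is a nonzero
multiple of `eᵢ - eⱼ`; these vectors span the whole hyperplane direction, of dimension `p - 1`.

The second puts them all on a level set of the strictly convex function `∑ xᵢ²`, which is its
maximum on their convex hull. A point of that level set lying strictly inside a segment of the
hull would give a strictly larger value at one of the endpoints, so each permutation is extreme.
-/

open Set

def permOrbit {ι R : Type*} (v : ι → R) : Set (ι → R) :=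
  range fun σ : Equiv.Perm ι => v ∘ σ

section PermOrbit

variable {ι R : Type*}

theorem permOrbit_finite [Finite ι] (v : ι → R) : (permOrbit v).Finite :=
  finite_range _

theorem comp_perm_mem_permOrbit {v w : ι → R} (hw : w ∈ permOrbit v) (σ : Equiv.Perm ι) :
    w ∘ σ ∈ permOrbit v := by
  obtain ⟨τ, rfl⟩ := hw
  exact ⟨τ * σ, rfl⟩

theorem sum_comp_eq_of_mem_permOrbit [Fintype ι] {M : Type*} [AddCommMonoid M] {v w : ι → R}
    (hw : w ∈ permOrbit v) (f : R → M) : ∑ i, f (w i) = ∑ i, f (v i) := by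
  obtain ⟨σ, rfl⟩ := hw
  exact Equiv.sum_comp σ (f ∘ v)

end PermOrbit

theorem Equiv.Perm.exists_apply_eq_and_apply_eq {ι : Type*} [DecidableEq ι] {i j a b : ι}
    (hij : i ≠ j) (hab : a ≠ b) : ∃ σ : Equiv.Perm ι, σ i = a ∧ σ j = b := by
  -- first send `i` to `a`, then move the image `c` of `j` to `b` without touching `a`
  set c := Equiv.swap i a j
  have hca : c ≠ a := by
    simpa [c, Equiv.swap_apply_self] using (Equiv.swap i a).injective.ne hij.symm
  refine ⟨(Equiv.swap i a).trans (Equiv.swap c b), ?_, ?_⟩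
  · simp [Equiv.swap_apply_of_ne_of_ne hca.symm hab]
  · simp [c]

theorem comp_swap_sub_eq_smul {ι R : Type*} [DecidableEq ι] [Ring R] (w : ι → R) (i j : ι) :
    w ∘ Equiv.swap i j - w = (w j - w i) • (Pi.single i 1 - Pi.single j 1) := by
  ext k
  rcases eq_or_ne k i with rfl | hki
  · rcases eq_or_ne k j with rfl | hkj <;> simp [*]
  rcases eq_or_ne k j with rfl | hkj
  · simp [*]
  · simp [*, Equiv.swap_apply_of_ne_of_ne]

section VectorSpan

variable {ι K : Type*} [DecidableEq ι] [Field K]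

theorem single_sub_single_mem_vectorSpan_permOrbit {v : ι → K} {a b : ι} (hab : v a ≠ v b)
    (i j : ι) : Pi.single i 1 - Pi.single j 1 ∈ vectorSpan K (permOrbit v) := by
  rcases eq_or_ne i j with rfl | hij
  · simp
  obtain ⟨σ, hσi, hσj⟩ := Equiv.Perm.exists_apply_eq_and_apply_eq hij (ne_of_apply_ne v hab)
  have hw : v ∘ σ ∈ permOrbit v := ⟨σ, rfl⟩
  have hmem := vsub_mem_vectorSpan K (comp_perm_mem_permOrbit hw (Equiv.swap i j)) hw
  rw [vsub_eq_sub, comp_swap_sub_eq_smul] at hmem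
  refine (Submodule.smul_mem_iff _ ?_).1 hmem
  simpa [hσi, hσj, sub_eq_zero] using hab.symm

variable [Fintype ι]

theorem vectorSpan_permOrbit {v : ι → K} {a b : ι} (hab : v a ≠ v b) :
    vectorSpan K (permOrbit v) = LinearMap.ker (∑ i, LinearMap.proj i : (ι → K) →ₗ[K] K) := by
  apply le_antisymm
  · rw [vectorSpan_def, Submodule.span_le]
    rintro _ ⟨w₁, hw₁, w₂, hw₂, rfl⟩
    simpa [sub_eq_zero] using
      (sum_comp_eq_of_mem_permOrbit hw₁ id).trans (sum_comp_eq_of_mem_permOrbit hw₂ id).symm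
  · intro y hy
    replace hy : ∑ i, y i = 0 := by simpa using hy
    have hy_eq : y = ∑ i, y i • (Pi.single i 1 - Pi.single a 1) := by
      simp_rw [smul_sub, Finset.sum_sub_distrib, ← Finset.sum_smul, hy, zero_smul, sub_zero,
        ← Pi.single_smul', smul_eq_mul, mul_one, Finset.univ_sum_single]
    rw [hy_eq]
    exact Submodule.sum_mem _ fun i _ =>
      Submodule.smul_mem _ _ (single_sub_single_mem_vectorSpan_permOrbit hab i a)

theorem finrank_vectorSpan_permOrbit {v : ι → K} {a b : ι} (hab : v a ≠ v b) :
    Module.finrank K (vectorSpan K (permOrbit v)) = Fintype.card ι - 1 := by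
  have hsum : (∑ i, LinearMap.proj i : (ι → K) →ₗ[K] K) ≠ 0 := fun h => by
    simpa using LinearMap.congr_fun h (Pi.single a 1)
  have := Module.Dual.finrank_ker_add_one_of_ne_zero hsum
  rw [Module.finrank_fintype_fun_eq_card] at this
  rw [vectorSpan_permOrbit hab]
  omega

end VectorSpan

theorem StrictConvexOn.mem_extremePoints_convexHull {𝕜 E β : Type*} [Field 𝕜] [LinearOrder 𝕜]
    [IsStrictOrderedRing 𝕜] [AddCommGroup E] [Module 𝕜 E] [AddCommGroup β] [LinearOrder β]
    [IsOrderedAddMonoid β] [Module 𝕜 β] [IsStrictOrderedModule 𝕜 β] {s S : Set E} {f : E → β}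
    (hf : StrictConvexOn 𝕜 s f) (hS : S ⊆ s) {x : E} (hx : x ∈ S)
    (hmax : ∀ y ∈ S, f y ≤ f x) : x ∈ extremePoints 𝕜 (convexHull 𝕜 S) := by
  have hhull : convexHull 𝕜 S ⊆ s := convexHull_min hS hf.1
  have hle : ∀ y ∈ convexHull 𝕜 S, f y ≤ f x := fun y hy => by
    obtain ⟨z, hz, hyz⟩ := hf.convexOn.exists_ge_of_mem_convexHull hS hy
    exact hyz.trans (hmax z hz)
  refine ⟨subset_convexHull 𝕜 S hx, fun y hy z hz hxyz => ?_⟩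
  obtain rfl : y = z := by
    by_contra hyz
    obtain ⟨a, b, ha, hb, hab, rfl⟩ := hxyz
    refine (hf.2 (hhull hy) (hhull hz) hyz ha hb hab).not_ge ?_
    calc a • f y + b • f z ≤ a • f (a • y + b • z) + b • f (a • y + b • z) := by
          gcongr
          exacts [hle y hy, hle z hz]
      _ = f (a • y + b • z) := Convex.combo_self hab _
  rw [openSegment_same, mem_singleton_iff] at hxyz
  exact hxyz.symm

theorem strictConvexOn_sum_sq {ι : Type*} [Fintype ι] :
    StrictConvexOn ℝ univ fun z : ι → ℝ => ∑ i, z i ^ 2 := by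
  have hsq := Even.strictConvexOn_pow (n := 2) even_two two_ne_zero
  refine ⟨convex_univ, fun x _ y _ hxy a b ha hb hab => ?_⟩
  obtain ⟨i, hi⟩ := Function.ne_iff.1 hxy
  simp only [smul_eq_mul, Finset.mul_sum, ← Finset.sum_add_distrib, Pi.add_apply, Pi.smul_apply]
  refine Finset.sum_lt_sum (fun j _ => ?_) ⟨i, Finset.mem_univ i, ?_⟩
  · exact hsq.convexOn.2 (mem_univ _) (mem_univ _) ha.le hb.le hab
  · exact hsq.2 (mem_univ _) (mem_univ _) hi ha hb hab

theorem extremePoints_convexHull_permOrbit {ι : Type*} [Fintype ι] (v : ι → ℝ) :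
    extremePoints ℝ (convexHull ℝ (permOrbit v)) = permOrbit v := by
  refine extremePoints_convexHull_subset.antisymm fun x hx => ?_
  refine strictConvexOn_sum_sq.mem_extremePoints_convexHull (subset_univ _) hx fun y hy => ?_
  exact ((sum_comp_eq_of_mem_permOrbit hy (· ^ 2)).trans
    (sum_comp_eq_of_mem_permOrbit hx (· ^ 2)).symm).le

/-- Theorem 3: the even permutohedron is a
`(p-1)`-dimensional convex polytope. For `p ≥ 3`, let
`v = (3/2, 3/2, 3, 4, …, p) ∈ ℝ^p` and let `V` be the set of all coordinate
permutations of `v`. Then `V` is finite (so its convex hull is a convex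
polytope), the affine span of `V` has dimension `p - 1`, and the set of
extreme points of `convexHull ℝ V` is exactly `V`. -/
theorem even_permutohedron_is_polytope_of_dim_p_sub_one
    (p : ℕ) (hp : 3 ≤ p)
    (v : Fin p → ℝ)
    (hv : v = fun k : Fin p => if (k : ℕ) < 2 then (3 / 2 : ℝ) else (k : ℕ) + 1)
    (V : Set (Fin p → ℝ))
    (hV : V = {w | ∃ σ : Equiv.Perm (Fin p), w = v ∘ σ}) :
    V.Finite ∧
    Module.finrank ℝ (affineSpan ℝ V).direction = p - 1 ∧
    Set.extremePoints ℝ (convexHull ℝ V) = V := by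
  obtain rfl : V = permOrbit v := by
    rw [hV]
    ext
    simp [permOrbit, eq_comm]
  have hv₀₂ : v ⟨0, by omega⟩ ≠ v ⟨2, by omega⟩ := by
    subst hv
    norm_num
  refine ⟨permOrbit_finite v, ?_, extremePoints_convexHull_permOrbit v⟩
  rw [direction_affineSpan, finrank_vectorSpan_permOrbit hv₀₂, Fintype.card_fin]
end
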